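/- Let $n \ge 3$ be an integer, let $\varepsilon \ge 1$, let $\tau \in \{1/n, 1/2, 1 - 1/n\}$, and set $\tau' = \min\{\tau, 1 - \tau\}$. Let $b_1, \ldots, b_k$ be independent $\{0,1\}$-valued random variables, each equal to $1$ with probability $\tau$. Call a bit value $v \in \{0,1\}$ a minority value if the probability that $b_j = v$ equals $\tau'$ (for $\tau = 1/2$ both values are minority values). Then the probability that there exist an $m \in \mathbb{N}$ with $2^m \le k$ and a minority value $v$ such that the number of indices $j \in \{k - 2^m + 1, \ldots, k\}$ with $b_j = v$ is at least $2^m \tau' + s(\varepsilon, 2^m \tau')$ is at most $n^{-\varepsilon/3} \log_2 k$. -/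

import Mathlib

/-!
For a fixed window of `N = 2^m` bits the number of minority bits is a sum of `N` independent
Bernoulli(`τ'`) indicators with mean `μ = N τ'`, and the threshold `s = s(ε, μ)` satisfies both
`s² ≥ ε² μ ln n` and `s ≥ ε ln n`. For `τ' = 1/n` the multiplicative Chernoff bound
`exp(-s² / (2μ + s))` is then at most `n^{-ε/3}`; for `τ' = 1/2`, where both values are
minority values, Hoeffding's bound `exp(-2s²/N) = exp(-s²/μ) ≤ n^{-ε²}` is at most `n^{-ε/3}/2`
for each of them. A window of length `1` never reaches the threshold, so a union bound over the
`⌊log₂ k⌋` windows of lengths `2, 4, …, 2^⌊log₂ k⌋` finishes the proof.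
-/

open MeasureTheory ProbabilityTheory

/-- The significance threshold `s(ε, μ) = ε · max{√(μ ln n), ln n}` used by the sig-cGA. -/
noncomputable def sigThreshold (n : ℕ) (ε μ : ℝ) : ℝ :=
  ε * max (Real.sqrt (μ * Real.log n)) (Real.log n)

open Real Finset

lemma two_mul_div_two_add_le_log_one_add {x : ℝ} (hx : 0 ≤ x) :
    2 * x / (2 + x) ≤ log (1 + x) := by
  set t := x / (2 + x) with ht
  have ht0 : 0 ≤ t := by positivity
  have ht1 : t < 1 := by rw [ht, div_lt_one (by linarith)]; linarith
  -- `log (1 + x) = 2 artanh t = 2 (t + t³/3 + …) ≥ 2 t`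
  have hlog : log (1 + t) - log (1 - t) = log (1 + x) := by
    rw [← log_div (by linarith) (by linarith)]
    congr 1
    rw [ht]
    field_simp
    ring
  have hsum := hasSum_log_sub_log_of_abs_lt_one (abs_lt.mpr ⟨by linarith, ht1⟩)
  rw [hlog] at hsum
  calc 2 * x / (2 + x) = 2 * (1 / (2 * ((0 : ℕ) : ℝ) + 1)) * t ^ (2 * 0 + 1) := by
        rw [ht]; ring
    _ ≤ log (1 + x) := le_hasSum hsum 0 fun k _ => by positivity

section BernoulliSum

variable {Ω ι : Type*} [MeasurableSpace Ω] {P : Measure Ω} [IsProbabilityMeasure P]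
  {A : ι → Set Ω} {W : Finset ι} {q : ℝ}

lemma mgf_indicator_one {s : Set Ω} (hs : MeasurableSet s) (t : ℝ) :
    mgf (s.indicator 1) P t = 1 - P.real s + P.real s * exp t := by
  have hexp : (fun ω => exp (t * s.indicator 1 ω)) =
      fun ω => 1 + s.indicator (fun _ => exp t - 1) ω := by
    ext ω; by_cases h : ω ∈ s <;> simp [h]
  rw [mgf, hexp, integral_add (integrable_const 1) ((integrable_const _).indicator hs),
    integral_indicator_const _ hs]
  simp only [integral_const, probReal_univ, smul_eq_mul]
  ring

lemma measureReal_le_sum_indicator_le_exp_mul_pow (hA : ∀ i, MeasurableSet (A i))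
    (hindep : iIndepFun (fun i => (A i).indicator (1 : Ω → ℝ)) P)
    (hq : ∀ i ∈ W, P.real (A i) = q) {t : ℝ} (ht : 0 ≤ t) (c : ℝ) :
    P.real {ω | c ≤ ∑ i ∈ W, (A i).indicator 1 ω} ≤
      exp (-t * c) * (1 - q + q * exp t) ^ #W := by
  have hmeas : ∀ i, Measurable ((A i).indicator (1 : Ω → ℝ)) :=
    fun i => measurable_const.indicator (hA i)
  have hint : Integrable (fun ω => exp (t * (∑ i ∈ W, (A i).indicator 1) ω)) P := by
    refine (integrable_const (exp (t * #W))).mono' (by fun_prop) (ae_of_all _ fun ω => ?_)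
    rw [norm_of_nonneg (exp_pos _).le, exp_le_exp, Finset.sum_apply]
    refine mul_le_mul_of_nonneg_left ?_ ht
    calc ∑ i ∈ W, (A i).indicator 1 ω ≤ ∑ i ∈ W, (1 : ℝ) :=
          sum_le_sum fun i _ => Set.indicator_le_self' (fun _ _ => zero_le_one) ω
      _ = #W := by simp
  have h := measure_ge_le_exp_mul_mgf c ht hint
  rw [hindep.mgf_sum hmeas, prod_congr rfl fun i hi => by rw [mgf_indicator_one (hA i), hq i hi],
    prod_const] at h
  simpa only [Finset.sum_apply] using h

lemma measureReal_mean_add_le_sum_indicator_le_chernoff (hA : ∀ i, MeasurableSet (A i))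
    (hindep : iIndepFun (fun i => (A i).indicator (1 : Ω → ℝ)) P)
    (hq : ∀ i ∈ W, P.real (A i) = q) (hμ : 0 < #W * q) {s : ℝ} (hs : 0 ≤ s) :
    P.real {ω | #W * q + s ≤ ∑ i ∈ W, (A i).indicator 1 ω} ≤
      exp (-(s ^ 2 / (2 * (#W * q) + s))) := by
  set μ : ℝ := #W * q
  have hq0 : 0 < q := pos_of_mul_pos_right hμ (Nat.cast_nonneg _)
  have hN : (0 : ℝ) < #W := pos_of_mul_pos_left hμ hq0.le
  set x := s / μ
  have hx : 0 ≤ x := by positivity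
  refine (measureReal_le_sum_indicator_le_exp_mul_pow hA hindep hq
    (log_nonneg (by linarith : (1 : ℝ) ≤ 1 + x)) _).trans ?_
  have hmgf : (1 - q + q * exp (log (1 + x))) ^ #W ≤ exp s := by
    rw [exp_log (by linarith)]
    calc (1 - q + q * (1 + x)) ^ #W = (q * x + 1) ^ #W := by ring
      _ ≤ exp (q * x) ^ #W := pow_le_pow_left₀ (by positivity) (add_one_le_exp _) _
      _ = exp s := by rw [← exp_nat_mul]; congr 1; simp only [x, μ]; field_simp
  have hlog : 2 * s * (μ + s) / (2 * μ + s) ≤ (μ + s) * log (1 + x) := by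
    calc 2 * s * (μ + s) / (2 * μ + s) = (μ + s) * (2 * x / (2 + x)) := by
          simp only [x]; field_simp
      _ ≤ (μ + s) * log (1 + x) := by
          gcongr; exact two_mul_div_two_add_le_log_one_add hx
  calc exp (-log (1 + x) * (μ + s)) * (1 - q + q * exp (log (1 + x))) ^ #W
      ≤ exp (-log (1 + x) * (μ + s)) * exp s := by gcongr
    _ = exp (s - (μ + s) * log (1 + x)) := by rw [← exp_add]; ring_nf
    _ ≤ exp (-(s ^ 2 / (2 * μ + s))) := by
        gcongr
        have : s - 2 * s * (μ + s) / (2 * μ + s) = -(s ^ 2 / (2 * μ + s)) := by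
          field_simp; ring
        linarith

lemma measureReal_mean_add_le_sum_indicator_le_hoeffding (hA : ∀ i, MeasurableSet (A i))
    (hindep : iIndepFun (fun i => (A i).indicator (1 : Ω → ℝ)) P)
    (hq : ∀ i ∈ W, P.real (A i) = q) {s : ℝ} (hs : 0 ≤ s) :
    P.real {ω | #W * q + s ≤ ∑ i ∈ W, (A i).indicator 1 ω} ≤ exp (-(2 * s ^ 2 / #W)) := by
  have hmean : ∀ i, P[(A i).indicator (1 : Ω → ℝ)] = P.real (A i) := fun i =>
    integral_indicator_one (hA i)
  have hcentered := hindep.comp (fun i x => x - P.real (A i)) fun i => measurable_id.sub_const _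
  have hsubG : ∀ i ∈ W, HasSubgaussianMGF (fun ω => (A i).indicator 1 ω - P.real (A i))
      ((‖(1 : ℝ) - 0‖₊ / 2) ^ 2) P := fun i _ => by
    rw [← hmean]
    refine hasSubgaussianMGF_of_mem_Icc (measurable_const.indicator (hA i)).aemeasurable
      (ae_of_all _ fun ω => ?_)
    by_cases h : ω ∈ A i <;> simp [h]
  have h := HasSubgaussianMGF.measure_sum_ge_le_of_iIndepFun hcentered hsubG hs
  convert h using 2
  · ext ω
    simp only [Set.mem_ofPred_eq, Function.comp_apply]
    rw [sum_sub_distrib, sum_congr rfl fun i hi => hq i hi, sum_const, nsmul_eq_mul]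
    constructor <;> intro h <;> linarith
  · simp only [sub_zero, nnnorm_one, one_div, inv_pow, sum_const, nsmul_eq_mul, NNReal.coe_mul,
      NNReal.coe_natCast, NNReal.coe_inv, NNReal.coe_pow, NNReal.coe_ofNat]
    ring

end BernoulliSum

section Threshold

variable {n : ℕ} {ε : ℝ}

lemma mul_log_le_sigThreshold (hε : 0 ≤ ε) (μ : ℝ) : ε * log n ≤ sigThreshold n ε μ :=
  mul_le_mul_of_nonneg_left (le_max_right _ _) hε

lemma sigThreshold_nonneg (hε : 0 ≤ ε) (μ : ℝ) : 0 ≤ sigThreshold n ε μ :=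
  (mul_nonneg hε (log_natCast_nonneg n)).trans (mul_log_le_sigThreshold hε μ)

lemma sq_mul_log_le_sigThreshold_sq_div {μ : ℝ} (hε : 0 ≤ ε) (hμ : 0 < μ) :
    ε ^ 2 * log n ≤ sigThreshold n ε μ ^ 2 / μ := by
  have hsqrt : ε * √(μ * log n) ≤ sigThreshold n ε μ :=
    mul_le_mul_of_nonneg_left (le_max_left _ _) hε
  have hsq : (ε * √(μ * log n)) ^ 2 = ε ^ 2 * log n * μ := by
    rw [mul_pow, sq_sqrt (mul_nonneg hμ.le (log_natCast_nonneg n))]; ring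
  rw [le_div_iff₀ hμ, ← hsq]
  exact pow_le_pow_left₀ (by positivity) hsqrt 2

lemma div_three_mul_log_le_sigThreshold_sq_div {μ : ℝ} (hε : 1 ≤ ε) (hμ : 0 < μ) :
    ε / 3 * log n ≤ sigThreshold n ε μ ^ 2 / (2 * μ + sigThreshold n ε μ) := by
  set s := sigThreshold n ε μ
  have hlog := log_natCast_nonneg n
  have hs : ε * log n ≤ s := mul_log_le_sigThreshold (by linarith) μ
  have hs0 : 0 ≤ s := sigThreshold_nonneg (by linarith) μ
  rw [le_div_iff₀ (by positivity)]
  rcases le_total s μ with hsμ | hμs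
  · have h := sq_mul_log_le_sigThreshold_sq_div (n := n) (by linarith : 0 ≤ ε) hμ
    rw [le_div_iff₀ hμ] at h
    nlinarith [mul_le_mul_of_nonneg_right hε (mul_nonneg hlog hμ.le)]
  · nlinarith

lemma exp_neg_sq_mul_log_le (hn : 3 ≤ n) (hε : 1 ≤ ε) :
    exp (-(ε ^ 2 * log n)) ≤ (n : ℝ) ^ (-(ε / 3)) / 2 := by
  have hlog3 : log 3 ≤ log n := log_le_log (by norm_num) (by exact_mod_cast hn)
  have hlog2 : 3 * log 2 ≤ 2 * log 3 := by
    have h := log_le_log (by norm_num) (by norm_num : (2 : ℝ) ^ 3 ≤ 3 ^ 2)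
    simpa only [log_pow, Nat.cast_ofNat] using h
  rw [rpow_def_of_pos (by positivity), le_div_iff₀ two_pos, ← exp_log two_pos, ← exp_add]
  gcongr
  have hε' : 0 ≤ (ε - 1) * (ε + 2 / 3) := mul_nonneg (by linarith) (by linarith)
  nlinarith [mul_nonneg hε' (log_natCast_nonneg n)]

lemma one_lt_sigThreshold (hn : 3 ≤ n) (hε : 1 ≤ ε) (μ : ℝ) : 1 < sigThreshold n ε μ := by
  have hlog : 1 < log n := by
    rw [lt_log_iff_exp_lt (by positivity)]
    have : (3 : ℝ) ≤ n := by exact_mod_cast hn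
    linarith [exp_one_lt_d9]
  nlinarith [mul_log_le_sigThreshold (n := n) (by linarith : 0 ≤ ε) μ]

end Threshold

section Significance

variable {Ω ι : Type*} [MeasurableSpace Ω] {P : Measure Ω} [IsProbabilityMeasure P]
  {A : ι → Set Ω} {W : Finset ι} {n : ℕ} {ε q : ℝ}

lemma measureReal_sigThreshold_le_sum_indicator_le (hA : ∀ i, MeasurableSet (A i))
    (hindep : iIndepFun (fun i => (A i).indicator (1 : Ω → ℝ)) P)
    (hq : ∀ i ∈ W, P.real (A i) = q) (hμ : 0 < #W * q) (hn : 0 < n) (hε : 1 ≤ ε) :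
    P.real {ω | #W * q + sigThreshold n ε (#W * q) ≤ ∑ i ∈ W, (A i).indicator 1 ω} ≤
      (n : ℝ) ^ (-(ε / 3)) := by
  refine (measureReal_mean_add_le_sum_indicator_le_chernoff hA hindep hq hμ
    (sigThreshold_nonneg (by linarith) _)).trans ?_
  rw [rpow_def_of_pos (by exact_mod_cast hn)]
  gcongr
  linarith [div_three_mul_log_le_sigThreshold_sq_div (n := n) hε hμ]

lemma measureReal_sigThreshold_le_sum_indicator_le_of_half (hA : ∀ i, MeasurableSet (A i))
    (hindep : iIndepFun (fun i => (A i).indicator (1 : Ω → ℝ)) P)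
    (hq : ∀ i ∈ W, P.real (A i) = 1 / 2) (hW : W.Nonempty) (hn : 3 ≤ n) (hε : 1 ≤ ε) :
    P.real {ω | #W * (1 / 2) + sigThreshold n ε (#W * (1 / 2)) ≤
      ∑ i ∈ W, (A i).indicator 1 ω} ≤ (n : ℝ) ^ (-(ε / 3)) / 2 := by
  have hμ : (0 : ℝ) < #W * (1 / 2) := by have := hW.card_pos; positivity
  refine (measureReal_mean_add_le_sum_indicator_le_hoeffding hA hindep hq
    (sigThreshold_nonneg (by linarith) _)).trans (le_trans ?_ (exp_neg_sq_mul_log_le hn hε))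
  have h := sq_mul_log_le_sigThreshold_sq_div (n := n) (by linarith : 0 ≤ ε) hμ
  rw [show ∀ s : ℝ, s ^ 2 / (#W * (1 / 2)) = 2 * s ^ 2 / #W from fun s => by ring] at h
  gcongr

end Significance

section Counting

variable {Ω ι β : Type*}

lemma natCast_card_filter_eq_sum_indicator [DecidableEq β] (b : ι → Ω → β) (v : β)
    (W : Finset ι) (ω : Ω) :
    (#{j ∈ W | b j ω = v} : ℝ) = ∑ j ∈ W, {ω | b j ω = v}.indicator 1 ω := by
  rw [natCast_card_filter]
  simp [Set.indicator_apply]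

lemma card_filter_sub_le_val {k a : ℕ} (h : a ≤ k) : #{j : Fin k | k - a ≤ (j : ℕ)} = a := by
  have hlt := Fin.card_filter_val_lt (n := k) (m := k - a)
  have hsplit := card_filter_add_card_filter_not (s := (univ : Finset (Fin k)))
    fun j => (j : ℕ) < k - a
  simp only [not_lt, card_univ, Fintype.card_fin] at hsplit
  omega

variable [MeasurableSpace Ω] {P : Measure Ω}

lemma ProbabilityTheory.iIndepFun.indicator_setOf_eq [MeasurableSpace β]
    [MeasurableSingletonClass β] {b : ι → Ω → β} (hindep : iIndepFun b P) (v : β) :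
    iIndepFun (fun j => {ω | b j ω = v}.indicator (1 : Ω → ℝ)) P := by
  convert hindep.comp (fun _ => ({v} : Set β).indicator (1 : β → ℝ))
    (fun _ => measurable_const.indicator (measurableSet_singleton v)) using 2 with j
  ext ω
  by_cases h : b j ω = v <;> simp [h]

variable [IsProbabilityMeasure P]

lemma measureReal_eq_ite_of_le_one {b : Ω → ℕ} (hmeas : Measurable b) (hb : ∀ ω, b ω ≤ 1)
    {τ : ℝ} (hτ : 0 ≤ τ) (hdist : P {ω | b ω = 1} = ENNReal.ofReal τ) {v : ℕ} (hv : v ≤ 1) :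
    P.real {ω | b ω = v} = if v = 1 then τ else 1 - τ := by
  have h1 : P.real {ω | b ω = 1} = τ := by rw [measureReal_def, hdist, ENNReal.toReal_ofReal hτ]
  obtain rfl | rfl : v = 0 ∨ v = 1 := by omega
  · have hcompl : {ω | b ω = 0} = {ω | b ω = 1}ᶜ := by
      ext ω; have := hb ω; simp only [Set.mem_ofPred_eq, Set.mem_compl_iff]; omega
    have hmeas1 : MeasurableSet {ω | b ω = 1} := hmeas (measurableSet_singleton 1)
    rw [hcompl, probReal_compl_eq_one_sub hmeas1, h1]
    rfl
  · simpa using h1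

end Counting

noncomputable def minorityValues (τ τ' : ℝ) : Finset ℕ :=
  {v ∈ range 2 | (if v = 1 then τ else 1 - τ) = τ'}

lemma card_minorityValues_le_one {τ τ' : ℝ} (hτ' : τ' ≠ 1 / 2) : #(minorityValues τ τ') ≤ 1 :=
  card_le_one.mpr fun v hv w hw => by
    simp only [minorityValues, mem_filter, mem_range] at hv hw
    by_contra hne
    obtain ⟨rfl, rfl⟩ | ⟨rfl, rfl⟩ : v = 0 ∧ w = 1 ∨ v = 1 ∧ w = 0 := by omega
    all_goals simp only [zero_ne_one, if_true, if_false] at hv hw; exact hτ' (by linarith)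

lemma card_minorityValues_le_two (τ τ' : ℝ) : #(minorityValues τ τ') ≤ 2 :=
  (card_filter_le _ _).trans (card_range 2).le

section Window

variable {Ω ι : Type*} [MeasurableSpace Ω] {P : Measure Ω} [IsProbabilityMeasure P]
  {W : Finset ι} {n : ℕ} {ε : ℝ}

lemma measureReal_exists_minority_count_ge_le {b : ι → Ω → ℕ} (hmeas : ∀ j, Measurable (b j))
    (hindep : iIndepFun b P) {τ τ' : ℝ}
    (hq : ∀ v ≤ 1, ∀ j, P.real {ω | b j ω = v} = if v = 1 then τ else 1 - τ)
    (hτ' : τ' = 1 / n ∨ τ' = 1 / 2) (hn : 3 ≤ n) (hε : 1 ≤ ε) (hW : W.Nonempty) :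
    P.real {ω | ∃ v : ℕ, v ≤ 1 ∧ (if v = 1 then τ else 1 - τ) = τ' ∧
      #W * τ' + sigThreshold n ε (#W * τ') ≤ #{j ∈ W | b j ω = v}} ≤ (n : ℝ) ^ (-(ε / 3)) := by
  set B : ℕ → Set Ω := fun v => {ω | #W * τ' + sigThreshold n ε (#W * τ') ≤
    ∑ j ∈ W, {ω | b j ω = v}.indicator 1 ω}
  have hA : ∀ v j, MeasurableSet {ω | b j ω = v} := fun v j => hmeas j (measurableSet_singleton v)
  have hqV : ∀ v ∈ minorityValues τ τ', ∀ j ∈ W, P.real {ω | b j ω = v} = τ' := by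
    intro v hv j _
    rw [minorityValues, mem_filter, mem_range] at hv
    rw [hq v (by omega) j, hv.2]
  have hsub : {ω | ∃ v : ℕ, v ≤ 1 ∧ (if v = 1 then τ else 1 - τ) = τ' ∧
      #W * τ' + sigThreshold n ε (#W * τ') ≤ #{j ∈ W | b j ω = v}} ⊆
      ⋃ v ∈ minorityValues τ τ', B v := by
    rintro ω ⟨v, hv, hmin, hge⟩
    refine Set.mem_biUnion (mem_filter.mpr ⟨mem_range.mpr (by omega), hmin⟩) ?_
    rwa [natCast_card_filter_eq_sum_indicator] at hge
  refine (measureReal_mono hsub (measure_ne_top _ _)).trans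
    ((measureReal_biUnion_finset_le _ B).trans ?_)
  rcases hτ' with hτ' | rfl
  · have hμ : 0 < #W * τ' := by have := hW.card_pos; rw [hτ']; positivity
    have hhalf : τ' ≠ 1 / 2 := by
      have : τ' ≤ 1 / 3 := by rw [hτ']; gcongr; exact_mod_cast hn
      linarith
    calc ∑ v ∈ minorityValues τ τ', P.real (B v)
        ≤ #(minorityValues τ τ') • (n : ℝ) ^ (-(ε / 3)) :=
          sum_le_card_nsmul _ _ _ fun v hv => measureReal_sigThreshold_le_sum_indicator_le
            (hA v) (hindep.indicator_setOf_eq v) (hqV v hv) hμ (by omega) hε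
      _ ≤ 1 • (n : ℝ) ^ (-(ε / 3)) := by gcongr; exact card_minorityValues_le_one hhalf
      _ = (n : ℝ) ^ (-(ε / 3)) := one_nsmul _
  · calc ∑ v ∈ minorityValues τ (1 / 2), P.real (B v)
        ≤ #(minorityValues τ (1 / 2)) • ((n : ℝ) ^ (-(ε / 3)) / 2) :=
          sum_le_card_nsmul _ _ _ fun v hv => measureReal_sigThreshold_le_sum_indicator_le_of_half
            (hA v) (hindep.indicator_setOf_eq v) (hqV v hv) hW hn hε
      _ ≤ 2 • ((n : ℝ) ^ (-(ε / 3)) / 2) := by gcongr; exact card_minorityValues_le_two _ _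
      _ = (n : ℝ) ^ (-(ε / 3)) := by rw [nsmul_eq_mul]; ring

lemma pos_of_sigThreshold_le_card_filter {k m : ℕ} {τ' : ℝ} {p : Fin k → Prop} [DecidablePred p]
    (hn : 3 ≤ n) (hε : 1 ≤ ε) (hτ' : 0 ≤ τ') (hmk : 2 ^ m ≤ k)
    (h : (2 ^ m : ℝ) * τ' + sigThreshold n ε ((2 ^ m : ℝ) * τ') ≤
      #{j : Fin k | k - 2 ^ m ≤ (j : ℕ) ∧ p j}) : 0 < m := by
  refine Nat.pos_of_ne_zero fun hm => ?_
  subst hm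
  have hcard : #{j : Fin k | k - 2 ^ 0 ≤ (j : ℕ) ∧ p j} ≤ 1 :=
    calc #{j : Fin k | k - 2 ^ 0 ≤ (j : ℕ) ∧ p j} ≤ #{j : Fin k | k - 2 ^ 0 ≤ (j : ℕ)} := by
          rw [← filter_filter]; exact card_filter_le _ _
      _ = 1 := card_filter_sub_le_val hmk
  have hcard' : (#{j : Fin k | k - 2 ^ 0 ≤ (j : ℕ) ∧ p j} : ℝ) ≤ 1 := by exact_mod_cast hcard
  have hμ : (0 : ℝ) ≤ 2 ^ 0 * τ' := by positivity
  linarith [one_lt_sigThreshold hn hε ((2 ^ 0 : ℝ) * τ')]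

lemma min_self_one_sub_eq {n : ℕ} (hn : 3 ≤ n) {τ : ℝ}
    (hτ : τ = 1 / (n : ℝ) ∨ τ = 1 / 2 ∨ τ = 1 - 1 / (n : ℝ)) :
    min τ (1 - τ) = 1 / n ∨ min τ (1 - τ) = 1 / 2 := by
  have hn3 : 1 / (n : ℝ) ≤ 1 / 3 := by gcongr; exact_mod_cast hn
  rcases hτ with rfl | rfl | rfl
  · exact .inl (min_eq_left (by linarith))
  · exact .inr (by norm_num)
  · exact .inl (by rw [min_eq_right (by linarith)]; ring)

end Window

/-- No false significance in an unbiased history: let `n ≥ 3`, `ε ≥ 1`,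
`τ ∈ {1/n, 1/2, 1 - 1/n}` and `τ' = min{τ, 1-τ}`. Let `b 0, …, b (k-1)` be independent
`{0,1}`-valued random variables, each `1` with probability `τ`. A value `v ∈ {0,1}` is a
minority value if `Pr[b j = v] = τ'`. Then the probability that for some `m ∈ ℕ` with
`2^m ≤ k` and some minority value `v`, the number of indices among the last `2^m` ones whose
bit equals `v` is at least `2^m τ' + s(ε, 2^m τ')`, is at most `n^{-ε/3} log₂ k`. -/
theorem no_false_significance
    (n : ℕ) (hn : 3 ≤ n) (ε : ℝ) (hε : 1 ≤ ε)
    (τ : ℝ) (hτ : τ = 1 / (n : ℝ) ∨ τ = 1 / 2 ∨ τ = 1 - 1 / (n : ℝ))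
    (τ' : ℝ) (hτ' : τ' = min τ (1 - τ))
    (k : ℕ)
    (Ω : Type*) [MeasurableSpace Ω] (P : Measure Ω) [IsProbabilityMeasure P]
    (b : Fin k → Ω → ℕ)
    (hmeas : ∀ j, Measurable (b j))
    (hval : ∀ j ω, b j ω ≤ 1)
    (hdist : ∀ j, P {ω | b j ω = 1} = ENNReal.ofReal τ)
    (hindep : iIndepFun b P) :
    (P {ω | ∃ m : ℕ, 2 ^ m ≤ k ∧ ∃ v : ℕ, v ≤ 1 ∧
        (if v = 1 then τ else 1 - τ) = τ' ∧
        (2 ^ m : ℝ) * τ' + sigThreshold n ε ((2 ^ m : ℝ) * τ') ≤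
          ((Finset.univ.filter (fun j : Fin k => k - 2 ^ m ≤ (j : ℕ) ∧ b j ω = v)).card : ℝ)
      }).toReal ≤ (n : ℝ) ^ (-(ε / 3)) * Real.logb 2 k := by
  have hτ'val : τ' = 1 / n ∨ τ' = 1 / 2 := hτ' ▸ min_self_one_sub_eq hn hτ
  have hτ'0 : 0 ≤ τ' := by rcases hτ'val with h | h <;> rw [h] <;> positivity
  have hq : ∀ v ≤ 1, ∀ j, P.real {ω | b j ω = v} = if v = 1 then τ else 1 - τ :=
    fun v hv j => measureReal_eq_ite_of_le_one (hmeas j) (hval j)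
      (hτ'0.trans (hτ' ▸ min_le_left _ _)) (hdist j) hv
  set E : ℕ → Set Ω := fun m => {ω | ∃ v : ℕ, v ≤ 1 ∧ (if v = 1 then τ else 1 - τ) = τ' ∧
    (2 ^ m : ℝ) * τ' + sigThreshold n ε ((2 ^ m : ℝ) * τ') ≤
      (#{j : Fin k | k - 2 ^ m ≤ (j : ℕ) ∧ b j ω = v} : ℝ)}
  have hsub : {ω | ∃ m : ℕ, 2 ^ m ≤ k ∧ ω ∈ E m} ⊆ ⋃ m ∈ Icc 1 (Nat.log 2 k), E m := by
    rintro ω ⟨m, hmk, hω⟩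
    have hm : 0 < m := by
      obtain ⟨v, -, -, hge⟩ := hω
      exact pos_of_sigThreshold_le_card_filter hn hε hτ'0 hmk hge
    exact Set.mem_biUnion (mem_Icc.mpr ⟨hm, Nat.le_log_of_pow_le one_lt_two hmk⟩) hω
  have hE : ∀ m ∈ Icc 1 (Nat.log 2 k), P.real (E m) ≤ (n : ℝ) ^ (-(ε / 3)) := by
    intro m hm
    have hk : k ≠ 0 := by rintro rfl; simp at hm
    have hmk : 2 ^ m ≤ k := Nat.pow_le_of_le_log hk (mem_Icc.mp hm).2
    have hW := card_filter_sub_le_val hmk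
    have h := measureReal_exists_minority_count_ge_le hmeas hindep hq hτ'val hn hε
      (card_pos.mp (by rw [hW]; positivity))
    rw [hW] at h
    simpa only [filter_filter, Nat.cast_pow, Nat.cast_ofNat] using h
  calc (P {ω | ∃ m : ℕ, 2 ^ m ≤ k ∧ ω ∈ E m}).toReal
      ≤ ∑ m ∈ Icc 1 (Nat.log 2 k), P.real (E m) :=
        (measureReal_mono hsub (measure_ne_top _ _)).trans (measureReal_biUnion_finset_le _ _)
    _ ≤ Nat.log 2 k * (n : ℝ) ^ (-(ε / 3)) := by
        simpa using sum_le_card_nsmul _ _ _ hE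
    _ ≤ (n : ℝ) ^ (-(ε / 3)) * Real.logb 2 k := by
        rw [mul_comm]; gcongr; exact_mod_cast natLog_le_logb k 2
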